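/- Let A = [[√2−1, 0],[0, √2+1]] and B = [[1,1],[0,1]] in SL(2, ℝ). Then (A⁻ⁿ B Aⁿ)(Aⁿ B A⁻ⁿ) = B^m where m = λ^{2n} + λ^{−2n} with λ = √2+1, and m is a positive integer growing exponentially in n; hence B is a distortion element of the subgroup generated by A and B. -/

import Mathlib

/-- The word length of `g` with respect to a generating set `S`. -/
noncomputable def wordLength {G : Type*} [Group G] (S : Set G) (g : G) : ℕ :=
  sInf {n : ℕ | ∃ w : Fin n → G, (∀ i, w i ∈ S ∨ (w i)⁻¹ ∈ S) ∧ (List.ofFn w).prod = g}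

/-- `f` is a distortion element with respect to the generating set `S`. -/
def IsDistortionElement {G : Type*} [Group G] (S : Set G) (f : G) : Prop :=
  ¬ IsOfFinOrder f ∧
    Filter.liminf (fun n : ℕ => (wordLength S (f ^ n) : ℝ) / n) Filter.atTop = 0

/-! Conjugating `B = [[1,1],[0,1]]` by the diagonal matrix `Aⁿ` scales its off-diagonal entry by
`λ^{±2n}`, so the product of the two conjugates is `B^m` with `m = λ^{2n} + λ^{-2n}`, an integer
because `λ² + λ⁻² = 6`. Hence `B^m` has word length at most `4n + 2` in `{A, B}` while
`m ≥ λ^{2n}` grows exponentially, which forces `liminf |Bᵏ| / k = 0`. -/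

open Filter Topology

section WordLength

variable {G : Type*} [Group G] {S : Set G}

def HasWord (S : Set G) (g : G) (n : ℕ) : Prop :=
  ∃ w : Fin n → G, (∀ i, w i ∈ S ∨ (w i)⁻¹ ∈ S) ∧ (List.ofFn w).prod = g

lemma wordLength_le_of_hasWord {g : G} {n : ℕ} (h : HasWord S g n) : wordLength S g ≤ n :=
  Nat.sInf_le h

lemma HasWord.mul {g h : G} {a b : ℕ} (hg : HasWord S g a) (hh : HasWord S h b) :
    HasWord S (g * h) (a + b) := by
  obtain ⟨v, hv, rfl⟩ := hg
  obtain ⟨w, hw, rfl⟩ := hh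
  refine ⟨Fin.append v w, fun i => Fin.addCases (fun i => ?_) (fun j => ?_) i, by
    simp [List.ofFn_fin_append]⟩
  · simpa using hv i
  · simpa using hw j

lemma hasWord_pow {g : G} (hg : g ∈ S ∨ g⁻¹ ∈ S) (n : ℕ) : HasWord S (g ^ n) n := by
  induction n with
  | zero => exact ⟨Fin.elim0, fun i => i.elim0, by simp⟩
  | succ n ih => exact pow_succ g n ▸ ih.mul ⟨![g], fun i => by simpa using hg, by simp⟩

lemma wordLength_pow_le {g : G} (hg : g ∈ S) (n : ℕ) : wordLength S (g ^ n) ≤ n :=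
  wordLength_le_of_hasWord (hasWord_pow (.inl hg) n)

lemma wordLength_conj_mul_conj_le {a b : G} (ha : a ∈ S) (hb : b ∈ S) (n : ℕ) :
    wordLength S (a⁻¹ ^ n * b * a ^ n * (a ^ n * b * a⁻¹ ^ n)) ≤ 4 * n + 2 := by
  have hpow := hasWord_pow (.inl ha) n
  have hpow_inv := hasWord_pow (g := a⁻¹) (.inr (by rwa [inv_inv])) n
  have hb' : HasWord S b 1 := pow_one b ▸ hasWord_pow (.inl hb) 1
  refine (wordLength_le_of_hasWord
    (((hpow_inv.mul hb').mul hpow).mul ((hpow.mul hb').mul hpow_inv))).trans ?_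
  omega

end WordLength

lemma liminf_eq_zero_of_tendsto_comp {u : ℕ → ℝ} (hu₀ : ∀ n, 0 ≤ u n)
    (hu : BddAbove (Set.range u)) {a : ℕ → ℕ} (ha : Tendsto a atTop atTop)
    (hua : Tendsto (u ∘ a) atTop (𝓝 0)) : liminf u atTop = 0 := by
  have hbdd : IsBoundedUnder (· ≥ ·) atTop u := isBoundedUnder_of ⟨0, hu₀⟩
  refine le_antisymm ?_ (le_liminf_of_le ?_ (.of_forall hu₀))
  · exact (ha.liminf_le_liminf_comp
      (hu.isBoundedUnder_of_range.isCoboundedUnder_flip) hbdd).trans_eq hua.liminf_eq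
  · exact hu.isBoundedUnder_of_range.isCoboundedUnder_flip

lemma tendsto_mul_add_one_div_pow_atTop_nhds_zero (C : ℝ) {r : ℝ} (hr : 1 < r) :
    Tendsto (fun n : ℕ => C * (n + 1) / r ^ n) atTop (𝓝 0) := by
  have hn : Tendsto (fun n : ℕ => (n : ℝ) ^ 1 / r ^ n) atTop (𝓝 0) :=
    tendsto_pow_const_div_const_pow_of_one_lt 1 hr
  have h1 : Tendsto (fun n : ℕ => (r ^ n)⁻¹) atTop (𝓝 0) :=
    tendsto_inv_atTop_zero.comp (tendsto_pow_atTop_atTop_of_one_lt hr)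
  convert (hn.add h1).const_mul C using 2 <;> simp [div_eq_mul_inv]; ring

theorem isDistortionElement_of_wordLength_le {G : Type*} [Group G] {S : Set G} {f : G}
    (hf : f ∈ S) (hfin : ¬IsOfFinOrder f) {r C : ℝ} (hr : 1 < r) {a : ℕ → ℕ}
    (ha : ∀ n, r ^ n ≤ a n) (hw : ∀ n, (wordLength S (f ^ a n) : ℝ) ≤ C * (n + 1)) :
    IsDistortionElement S f := by
  refine ⟨hfin, liminf_eq_zero_of_tendsto_comp (a := a) (fun n => by positivity) ⟨1, ?_⟩ ?_ ?_⟩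
  · rintro _ ⟨k, rfl⟩
    exact div_le_one_of_le₀ (by exact_mod_cast wordLength_pow_le hf k) k.cast_nonneg
  · refine tendsto_natCast_atTop_iff.mp (tendsto_atTop_mono ha ?_)
    exact tendsto_pow_atTop_atTop_of_one_lt hr
  · refine squeeze_zero (fun n => div_nonneg (Nat.cast_nonneg _) (Nat.cast_nonneg _)) (fun n => ?_)
      (tendsto_mul_add_one_div_pow_atTop_nhds_zero C hr)
    exact div_le_div₀ ((Nat.cast_nonneg _).trans (hw n)) (hw n)
      (pow_pos (zero_lt_one.trans hr) n) (ha n)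

-- `x ^ n + y ^ n` is the Dickson polynomial `D_n(x + y, 1)`, which has integer coefficients.
open Polynomial in
theorem exists_intCast_eq_pow_add_pow {R : Type*} [CommRing R] {x y : R} (hxy : x * y = 1)
    {c : ℤ} (hc : x + y = c) (n : ℕ) : ∃ m : ℤ, (m : R) = x ^ n + y ^ n :=
  ⟨(dickson 1 (1 : ℤ) n).eval c, by
    have h := eval_intCast_map (Int.castRingHom R) (dickson 1 (1 : ℤ) n) c
    rw [map_dickson, map_one, ← hc, dickson_one_one_eval_add_inv x y hxy] at h
    simpa using h.symm⟩

lemma exists_natCast_eq_pow_add_inv_pow {x : ℝ} (hx : x ≠ 0) {c : ℤ}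
    (hc : x ^ 2 + x⁻¹ ^ 2 = c) (n : ℕ) : ∃ m : ℕ, (m : ℝ) = x ^ (2 * n) + x⁻¹ ^ (2 * n) := by
  obtain ⟨m, hm⟩ := exists_intCast_eq_pow_add_pow (x := x ^ 2) (y := x⁻¹ ^ 2)
    (by rw [← mul_pow, mul_inv_cancel₀ hx, one_pow]) hc n
  simp only [← pow_mul] at hm
  have hm_nonneg : (0 : ℝ) ≤ m :=
    hm ▸ add_nonneg ((even_two_mul n).pow_nonneg x) ((even_two_mul n).pow_nonneg x⁻¹)
  lift m to ℕ using by exact_mod_cast hm_nonneg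
  exact ⟨m, hm⟩

section UnipotentConjugation

variable {R : Type*} [CommRing R]

lemma unipotent_mul_unipotent (s t : R) :
    !![1, s; 0, 1] * !![1, t; 0, 1] = !![(1 : R), s + t; 0, 1] := by
  simp [add_comm]

lemma unipotent_pow (t : R) (n : ℕ) : !![1, t; 0, 1] ^ n = !![(1 : R), n * t; 0, 1] := by
  induction n with
  | zero => simp [Matrix.one_fin_two]
  | succ n ih => rw [pow_succ, ih, unipotent_mul_unipotent]; push_cast; ring_nf

lemma diagonal_fin_two_pow (a d : R) (n : ℕ) :
    !![a, 0; 0, d] ^ n = !![a ^ n, 0; 0, d ^ n] := by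
  induction n with
  | zero => simp [Matrix.one_fin_two]
  | succ n ih => rw [pow_succ, ih, Matrix.mul_fin_two]; simp [pow_succ]

namespace Matrix.SpecialLinearGroup

variable {D U : SpecialLinearGroup (Fin 2) R} {a d t : R}

lemma mul_eq_one_of_coe_eq_diagonal (hD : (D : Matrix (Fin 2) (Fin 2) R) = !![a, 0; 0, d]) :
    a * d = 1 := by
  simpa [hD, Matrix.det_fin_two] using D.det_coe

lemma coe_inv_of_coe_eq_diagonal (hD : (D : Matrix (Fin 2) (Fin 2) R) = !![a, 0; 0, d]) :
    ((D⁻¹ : SpecialLinearGroup (Fin 2) R) : Matrix (Fin 2) (Fin 2) R) = !![d, 0; 0, a] := by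
  simp [coe_inv, hD, Matrix.adjugate_fin_two]

lemma coe_inv_mul_mul_of_coe_eq_diagonal (hD : (D : Matrix (Fin 2) (Fin 2) R) = !![a, 0; 0, d])
    (hU : (U : Matrix (Fin 2) (Fin 2) R) = !![1, t; 0, 1]) :
    ((D⁻¹ * U * D : SpecialLinearGroup (Fin 2) R) : Matrix (Fin 2) (Fin 2) R) =
      !![1, d ^ 2 * t; 0, 1] := by
  have had := mul_eq_one_of_coe_eq_diagonal hD
  simp only [coe_mul, coe_inv_of_coe_eq_diagonal hD, hD, hU, Matrix.mul_fin_two]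
  ext i j
  fin_cases i <;> fin_cases j <;> simp [mul_comm d a, had, sq, mul_right_comm]

lemma coe_mul_mul_inv_of_coe_eq_diagonal (hD : (D : Matrix (Fin 2) (Fin 2) R) = !![a, 0; 0, d])
    (hU : (U : Matrix (Fin 2) (Fin 2) R) = !![1, t; 0, 1]) :
    ((D * U * D⁻¹ : SpecialLinearGroup (Fin 2) R) : Matrix (Fin 2) (Fin 2) R) =
      !![1, a ^ 2 * t; 0, 1] := by
  have had := mul_eq_one_of_coe_eq_diagonal hD
  simp only [coe_mul, coe_inv_of_coe_eq_diagonal hD, hD, hU, Matrix.mul_fin_two]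
  ext i j
  fin_cases i <;> fin_cases j <;> simp [mul_comm d a, had, sq, mul_right_comm]

lemma not_isOfFinOrder_of_coe_eq_unipotent [IsDomain R] [CharZero R]
    (hU : (U : Matrix (Fin 2) (Fin 2) R) = !![1, t; 0, 1]) (ht : t ≠ 0) : ¬IsOfFinOrder U := by
  refine injective_pow_iff_not_isOfFinOrder.mp fun m n hmn => ?_
  have h := congrArg (fun V : SpecialLinearGroup (Fin 2) R => (V : Matrix (Fin 2) (Fin 2) R) 0 1) hmn
  simp only [coe_pow, hU, unipotent_pow] at h
  simpa [ht] using h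

end Matrix.SpecialLinearGroup

end UnipotentConjugation

open Matrix.SpecialLinearGroup in
/-- For `A = [[√2−1,0],[0,√2+1]]` and `B = [[1,1],[0,1]]` in `SL(2,ℝ)`, one has
`(A⁻ⁿ B Aⁿ)(Aⁿ B A⁻ⁿ) = B^m` where `m = λ^{2n} + λ^{-2n}` with `λ = √2+1` is a
positive integer growing exponentially; hence `B` is a distortion element of the
subgroup generated by `A` and `B`. -/
theorem unipotent_distorted_in_SL2
    (A B : Matrix.SpecialLinearGroup (Fin 2) ℝ)
    (hA : (A : Matrix (Fin 2) (Fin 2) ℝ) = !![Real.sqrt 2 - 1, 0; 0, Real.sqrt 2 + 1])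
    (hB : (B : Matrix (Fin 2) (Fin 2) ℝ) = !![1, 1; 0, 1])
    (lam : ℝ) (hlam : lam = Real.sqrt 2 + 1) :
    (∀ n : ℕ, ∃ m : ℤ, 0 < m ∧ (m : ℝ) = lam ^ (2 * n) + lam⁻¹ ^ (2 * n) ∧
      (A⁻¹ ^ n * B * A ^ n) * (A ^ n * B * A⁻¹ ^ n) = B ^ m) ∧
    IsDistortionElement ({A, B} : Set (Matrix.SpecialLinearGroup (Fin 2) ℝ)) B := by
  have hsqrt : Real.sqrt 2 ^ 2 = 2 := Real.sq_sqrt zero_le_two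
  have hlam_inv : lam⁻¹ = Real.sqrt 2 - 1 :=
    inv_eq_of_mul_eq_one_right (by rw [hlam]; linear_combination hsqrt)
  have hlam_one : 1 < lam := by rw [hlam]; linarith [Real.sqrt_pos.2 two_pos]
  have hlam_pos : 0 < lam := zero_lt_one.trans hlam_one
  choose m hm using exists_natCast_eq_pow_add_inv_pow hlam_pos.ne' (c := 6)
    (by rw [hlam_inv, hlam]; push_cast; linear_combination 2 * hsqrt)
  have hAn (n : ℕ) : ((A ^ n : Matrix.SpecialLinearGroup (Fin 2) ℝ) : Matrix (Fin 2) (Fin 2) ℝ) =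
      !![lam⁻¹ ^ n, 0; 0, lam ^ n] := by
    rw [coe_pow, hA, diagonal_fin_two_pow, hlam_inv, hlam]
  have hconj (n : ℕ) : A⁻¹ ^ n * B * A ^ n * (A ^ n * B * A⁻¹ ^ n) = B ^ m n := by
    apply Subtype.ext
    rw [inv_pow, coe_mul, coe_inv_mul_mul_of_coe_eq_diagonal (hAn n) hB,
      coe_mul_mul_inv_of_coe_eq_diagonal (hAn n) hB, unipotent_mul_unipotent, coe_pow, hB,
      unipotent_pow, hm n]
    ring_nf
  have hm_ge (n : ℕ) : (lam ^ 2) ^ n ≤ m n := by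
    rw [hm n, ← pow_mul]
    exact le_add_of_nonneg_right (by positivity)
  refine ⟨fun n => ⟨m n, ?_, by exact_mod_cast hm n, by rw [zpow_natCast, hconj]⟩, ?_⟩
  · have hpos : (0 : ℝ) < m n := (pow_pos (by positivity) n).trans_le (hm_ge n)
    exact_mod_cast hpos
  · refine isDistortionElement_of_wordLength_le (C := 4) (a := m) (Set.mem_insert_of_mem A rfl)
      (not_isOfFinOrder_of_coe_eq_unipotent hB one_ne_zero) (one_lt_pow₀ hlam_one two_ne_zero)
      hm_ge (fun n => ?_)
    rw [← hconj]
    exact_mod_cast (wordLength_conj_mul_conj_le (Set.mem_insert A {B})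
      (Set.mem_insert_of_mem A rfl) n).trans (by omega)
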